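/- arXiv:1901.10852 — 5 statements merged into one kernel-verified Lean document; each statement's English description precedes it below -/
import Mathlib

section
/- Let f ∈ ℝ^T be piecewise constant on [s,e] with a single change-point at r (s ≤ r < e), jump magnitude Δ = |f_{r+1} − f_r|. For any b with r ≤ b < e, setting ρ = b − r and η_L = r − s + 1, one has (f̃_{s,e}^r)² − (f̃_{s,e}^b)² = (ρ η_L/(ρ + η_L)) Δ², where f̃_{s,e}^b = ⟨f, ψ_{s,e}^b⟩ is the CUSUM value. -/
open Finset

/-- The CUSUM statistic f̃_{s,e}^b of the vector f on [s,e] with split at b. -/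
noncomputable def cusum (f : ℕ → ℝ) (s e b : ℕ) : ℝ :=
  Real.sqrt (((e : ℝ) - b) / ((((e : ℝ) - s + 1)) * ((b : ℝ) - s + 1))) *
      (∑ t ∈ Finset.Icc s b, f t)
    - Real.sqrt (((b : ℝ) - s + 1) / ((((e : ℝ) - s + 1)) * ((e : ℝ) - b))) *
      (∑ t ∈ Finset.Icc (b + 1) e, f t)

lemma cusum_eq (f : ℕ → ℝ) (s r e b : ℕ)
    (hsr : s ≤ r) (hrb : r ≤ b) (hbe : b < e)
    (hf1 : ∀ t, s ≤ t → t ≤ r → f t = f r)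
    (hf2 : ∀ t, r + 1 ≤ t → t ≤ e → f t = f (r + 1)) :
    cusum f s e b = ((r : ℝ) - s + 1) * (f r - f (r + 1)) *
      Real.sqrt (((e : ℝ) - b) / ((((e : ℝ) - s + 1)) * ((b : ℝ) - s + 1))) := by
  have hs : (s : ℝ) ≤ r := by exact_mod_cast hsr
  have hrbR : (r : ℝ) ≤ b := by exact_mod_cast hrb
  have hbeR : (b : ℝ) < e := by exact_mod_cast hbe
  have hB : (0:ℝ) < (b : ℝ) - s + 1 := by linarith
  have hA : (0:ℝ) < (e : ℝ) - b := by linarith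
  have hn : (0:ℝ) < (e : ℝ) - s + 1 := by linarith
  have hsum1 : ∑ t ∈ Finset.Icc s b, f t
      = ((r : ℝ) - s + 1) * f r + ((b : ℝ) - r) * f (r + 1) := by
    have hsplit : Finset.Icc s b = Finset.Icc s r ∪ Finset.Ioc r b := by
      ext x; simp only [Finset.mem_Icc, Finset.mem_union, Finset.mem_Ioc]; omega
    rw [hsplit, Finset.sum_union (by simp [Finset.disjoint_left]; omega)]
    have e1 : ∑ t ∈ Finset.Icc s r, f t = ((r : ℝ) - s + 1) * f r := by
      rw [Finset.sum_congr rfl (fun t ht => by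
        simp only [Finset.mem_Icc] at ht; exact hf1 t ht.1 ht.2)]
      rw [Finset.sum_const, Nat.card_Icc, nsmul_eq_mul]
      have : ((r + 1 - s : ℕ) : ℝ) = (r : ℝ) - s + 1 := by
        push_cast [Nat.cast_sub (by omega : s ≤ r + 1)]; ring
      rw [this]
    have e2 : ∑ t ∈ Finset.Ioc r b, f t = ((b : ℝ) - r) * f (r + 1) := by
      rw [Finset.sum_congr rfl (fun t ht => by
        simp only [Finset.mem_Ioc] at ht; exact hf2 t (by omega) (by omega))]
      rw [Finset.sum_const, Nat.card_Ioc, nsmul_eq_mul]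
      have : ((b - r : ℕ) : ℝ) = (b : ℝ) - r := by
        push_cast [Nat.cast_sub hrb]; ring
      rw [this]
    rw [e1, e2]
  have hsum2 : ∑ t ∈ Finset.Icc (b + 1) e, f t = ((e : ℝ) - b) * f (r + 1) := by
    rw [Finset.sum_congr rfl (fun t ht => by
      simp only [Finset.mem_Icc] at ht; exact hf2 t (by omega) ht.2)]
    rw [Finset.sum_const, Nat.card_Icc, nsmul_eq_mul]
    have : ((e + 1 - (b + 1) : ℕ) : ℝ) = (e : ℝ) - b := by
      rw [show e + 1 - (b + 1) = e - b from by omega, Nat.cast_sub hbe.le]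
    rw [this]
  have key : Real.sqrt (((e : ℝ) - b) / ((((e : ℝ) - s + 1)) * ((b : ℝ) - s + 1)))
        * ((b : ℝ) - s + 1)
      = Real.sqrt (((b : ℝ) - s + 1) / ((((e : ℝ) - s + 1)) * ((e : ℝ) - b)))
        * ((e : ℝ) - b) := by
    rw [show ((b : ℝ) - s + 1) = Real.sqrt (((b : ℝ) - s + 1) ^ 2) from
        (Real.sqrt_sq hB.le).symm, ← Real.sqrt_mul (by positivity)]
    rw [show ((e : ℝ) - b) = Real.sqrt (((e : ℝ) - b) ^ 2) from
        (Real.sqrt_sq hA.le).symm, ← Real.sqrt_mul (by positivity)]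
    congr 1
    field_simp
    rw [Real.sq_sqrt (by nlinarith [sq_nonneg ((e:ℝ)-b), sq_nonneg ((b:ℝ)-s+1)]),
      Real.sq_sqrt (by nlinarith [sq_nonneg ((e:ℝ)-b), sq_nonneg ((b:ℝ)-s+1)])]
  rw [cusum, hsum1, hsum2]
  have expand : ((r : ℝ) - s + 1) * f r + ((b : ℝ) - r) * f (r + 1)
      = ((r : ℝ) - s + 1) * (f r - f (r + 1)) + ((b : ℝ) - s + 1) * f (r + 1) := by ring
  rw [expand]
  linear_combination key * f (r + 1)

set_option maxHeartbeats 1000000 in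
/-- Lemma 4(1) of the NOT paper: for a single change-point at r and r ≤ b < e,
(f̃_{s,e}^r)² − (f̃_{s,e}^b)² = (ρη_L/(ρ+η_L))Δ² with ρ = b−r, η_L = r−s+1. -/
theorem stmt_5 (T s r e b : ℕ) (f : ℕ → ℝ)
    (h1 : 1 ≤ s) (hsr : s ≤ r) (hre : r < e) (heT : e ≤ T)
    (hrb : r ≤ b) (hbe : b < e)
    (hf1 : ∀ t, s ≤ t → t ≤ r → f t = f r)
    (hf2 : ∀ t, r + 1 ≤ t → t ≤ e → f t = f (r + 1)) :
    (cusum f s e r) ^ 2 - (cusum f s e b) ^ 2 =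
      (((b : ℝ) - r) * ((r : ℝ) - s + 1) / (((b : ℝ) - r) + ((r : ℝ) - s + 1))) *
        |f (r + 1) - f r| ^ 2 := by
  have hs : (s : ℝ) ≤ r := by exact_mod_cast hsr
  have hrbR : (r : ℝ) ≤ b := by exact_mod_cast hrb
  have hbeR : (b : ℝ) < e := by exact_mod_cast hbe
  have hB : (0:ℝ) < (b : ℝ) - s + 1 := by linarith
  have hBr : (0:ℝ) < (r : ℝ) - s + 1 := by linarith
  have hA : (0:ℝ) < (e : ℝ) - b := by linarith
  have hAr : (0:ℝ) < (e : ℝ) - r := by linarith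
  have hn : (0:ℝ) < (e : ℝ) - s + 1 := by linarith
  rw [cusum_eq f s r e b hsr hrb hbe hf1 hf2,
      cusum_eq f s r e r hsr le_rfl hre hf1 hf2]
  rw [mul_pow, mul_pow, mul_pow, mul_pow,
      Real.sq_sqrt (by positivity), Real.sq_sqrt (by positivity)]
  rw [sq_abs]
  have hd : (f (r + 1) - f r) ^ 2 = (f r - f (r + 1)) ^ 2 := by ring
  rw [hd]
  have e1 : ((e : ℝ) - s + 1) * ((r : ℝ) - s + 1) ≠ 0 := by positivity
  have e2 : ((e : ℝ) - s + 1) * ((b : ℝ) - s + 1) ≠ 0 := by positivity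
  have e3 : ((b : ℝ) - r) + ((r : ℝ) - s + 1) ≠ 0 := by nlinarith
  field_simp
  ring
end

section
/- Let f ∈ ℝ^T be piecewise constant on [s,e] with a single change-point at r (s ≤ r < e), jump magnitude Δ = |f_{r+1} − f_r|. For any b with s ≤ b < r, setting ρ = r − b and η_R = e − r, one has (f̃_{s,e}^r)² − (f̃_{s,e}^b)² = (ρ η_R/(ρ + η_R)) Δ². -/
open Finset

lemma cusum_sq_aux (n p q S1 S2 : ℝ) (hn : 0 < n) (hp : 0 < p) (hq : 0 < q) :
    (Real.sqrt (q / (n * p)) * S1 - Real.sqrt (p / (n * q)) * S2) ^ 2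
      = q * S1 ^ 2 / (n * p) + p * S2 ^ 2 / (n * q) - 2 * S1 * S2 / n := by
  have h1 : Real.sqrt (q / (n * p)) ^ 2 = q / (n * p) :=
    Real.sq_sqrt (by positivity)
  have h2 : Real.sqrt (p / (n * q)) ^ 2 = p / (n * q) :=
    Real.sq_sqrt (by positivity)
  have h3 : Real.sqrt (q / (n * p)) * Real.sqrt (p / (n * q)) = 1 / n := by
    rw [← Real.sqrt_mul (by positivity)]
    have he : q / (n * p) * (p / (n * q)) = (1 / n) ^ 2 := by
      field_simp
    rw [he, Real.sqrt_sq (by positivity)]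
  have expand : (Real.sqrt (q / (n * p)) * S1 - Real.sqrt (p / (n * q)) * S2) ^ 2
      = Real.sqrt (q / (n * p)) ^ 2 * S1 ^ 2
        - 2 * (Real.sqrt (q / (n * p)) * Real.sqrt (p / (n * q))) * (S1 * S2)
        + Real.sqrt (p / (n * q)) ^ 2 * S2 ^ 2 := by ring
  rw [expand, h1, h2, h3]
  ring

lemma sum_const_Icc (f : ℕ → ℝ) (a : ℝ) (m k : ℕ) (hmk : m ≤ k)
    (hf : ∀ t, m ≤ t → t ≤ k → f t = a) :
    ∑ t ∈ Finset.Icc m k, f t = ((k : ℝ) - m + 1) * a := by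
  have h : ∑ t ∈ Finset.Icc m k, f t = ∑ _t ∈ Finset.Icc m k, a :=
    Finset.sum_congr rfl (fun t ht => by
      rw [Finset.mem_Icc] at ht; exact hf t ht.1 ht.2)
  rw [h, Finset.sum_const, Nat.card_Icc, nsmul_eq_mul]
  have : ((k + 1 - m : ℕ) : ℝ) = (k : ℝ) - m + 1 := by
    have := Nat.cast_sub (by omega : m ≤ k + 1) (R := ℝ)
    push_cast at this ⊢; linarith
  rw [this]

set_option maxHeartbeats 1000000 in
lemma alg (n p q m q' ρ a c : ℝ) (hm : m ≠ 0) (hρ : ρ + q ≠ 0) (hq : q ≠ 0)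
    (hp : p ≠ 0) (hq' : q' ≠ 0) (hn : n ≠ 0)
    (e1 : n = p + q) (e2 : p = m + ρ) (e3 : q' = ρ + q) :
    (q * (p * a) ^ 2 / (n * p) + p * (q * c) ^ 2 / (n * q) - 2 * (p * a) * (q * c) / n)
      - (q' * (m * a) ^ 2 / (n * m) + m * (ρ * a + q * c) ^ 2 / (n * q')
          - 2 * (m * a) * (ρ * a + q * c) / n)
      = ρ * q / (ρ + q) * (c - a) ^ 2 := by
  subst e3 e2 e1
  field_simp
  ring

/-- Lemma 4(2) of the NOT paper: for a single change-point at r and s ≤ b < r,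
(f̃_{s,e}^r)² − (f̃_{s,e}^b)² = (ρη_R/(ρ+η_R))Δ² with ρ = r−b, η_R = e−r. -/
theorem stmt_6 (T s r e b : ℕ) (f : ℕ → ℝ)
    (h1 : 1 ≤ s) (hsr : s ≤ r) (hre : r < e) (heT : e ≤ T)
    (hsb : s ≤ b) (hbr : b < r)
    (hf1 : ∀ t, s ≤ t → t ≤ r → f t = f r)
    (hf2 : ∀ t, r + 1 ≤ t → t ≤ e → f t = f (r + 1)) :
    (cusum f s e r) ^ 2 - (cusum f s e b) ^ 2 =
      (((r : ℝ) - b) * ((e : ℝ) - r) / (((r : ℝ) - b) + ((e : ℝ) - r))) *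
        |f (r + 1) - f r| ^ 2 := by
  set a := f r with ha
  set c := f (r + 1) with hc
  have hsb' : (s : ℝ) ≤ b := by exact_mod_cast hsb
  have hbr' : (b : ℝ) < r := by exact_mod_cast hbr
  have hre' : (r : ℝ) < e := by exact_mod_cast hre
  have hS1 : ∑ t ∈ Finset.Icc s r, f t = ((r : ℝ) - s + 1) * a :=
    sum_const_Icc f a s r hsr (fun t h1 h2 => hf1 t h1 h2)
  have hS2 : ∑ t ∈ Finset.Icc (r + 1) e, f t = ((e : ℝ) - r) * c := by
    have := sum_const_Icc f c (r + 1) e (by omega) (fun t h1 h2 => hf2 t h1 h2)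
    rw [this]; push_cast; ring
  have hT1 : ∑ t ∈ Finset.Icc s b, f t = ((b : ℝ) - s + 1) * a :=
    sum_const_Icc f a s b hsb (fun t h1 h2 => hf1 t h1 (by omega))
  have hT2 : ∑ t ∈ Finset.Icc (b + 1) e, f t
      = ((r : ℝ) - b) * a + ((e : ℝ) - r) * c := by
    have hsplit : ∑ t ∈ Finset.Icc (b + 1) r, f t + ∑ t ∈ Finset.Icc (r + 1) e, f t
        = ∑ t ∈ Finset.Icc (b + 1) e, f t := by
      rw [Finset.Icc_add_one_left_eq_Ioc, Finset.Icc_add_one_left_eq_Ioc, Finset.Icc_add_one_left_eq_Ioc]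
      exact Finset.sum_Ioc_consecutive _ (by omega) (by omega)
    rw [← hsplit, hS2,
      sum_const_Icc f a (b + 1) r (by omega) (fun t h1 h2 => hf1 t (by omega) h2)]
    push_cast; ring
  rw [show cusum f s e r = Real.sqrt (((e : ℝ) - r) / (((e : ℝ) - s + 1) * ((r : ℝ) - s + 1))) * (((r : ℝ) - s + 1) * a)
      - Real.sqrt (((r : ℝ) - s + 1) / (((e : ℝ) - s + 1) * ((e : ℝ) - r))) * (((e : ℝ) - r) * c) by
        rw [cusum, hS1, hS2],
    show cusum f s e b = Real.sqrt (((e : ℝ) - b) / (((e : ℝ) - s + 1) * ((b : ℝ) - s + 1))) * (((b : ℝ) - s + 1) * a)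
      - Real.sqrt (((b : ℝ) - s + 1) / (((e : ℝ) - s + 1) * ((e : ℝ) - b))) * (((r : ℝ) - b) * a + ((e : ℝ) - r) * c) by
        rw [cusum, hT1, hT2],
    cusum_sq_aux ((e : ℝ) - s + 1) ((r : ℝ) - s + 1) ((e : ℝ) - r) _ _
      (by linarith) (by linarith) (by linarith),
    cusum_sq_aux ((e : ℝ) - s + 1) ((b : ℝ) - s + 1) ((e : ℝ) - b) _ _
      (by linarith) (by linarith) (by linarith),
    show |c - a| ^ 2 = (c - a) ^ 2 from sq_abs _]
  have hn : ((e : ℝ) - s + 1) ≠ 0 := by linarith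
  have hp : ((r : ℝ) - s + 1) ≠ 0 := by linarith
  have hq : ((e : ℝ) - r) ≠ 0 := by linarith
  have hp' : ((b : ℝ) - s + 1) ≠ 0 := by linarith
  have hq' : ((e : ℝ) - b) ≠ 0 := by linarith
  have hd : ((r : ℝ) - b) + ((e : ℝ) - r) ≠ 0 := by linarith
  exact alg ((e : ℝ) - s + 1) ((r : ℝ) - s + 1) ((e : ℝ) - r) ((b : ℝ) - s + 1)
    ((e : ℝ) - b) ((r : ℝ) - b) a c hp' hd hq hp hq' hn (by ring) (by ring) (by ring)
end

section
/- Let f ∈ ℝ^T be piecewise constant on [s,e] with a single change-point at r (s ≤ r < e). For every b with s ≤ b < e, ‖ψ_{s,e}^b ⟨f, ψ_{s,e}^b⟩ − ψ_{s,e}^r ⟨f, ψ_{s,e}^r⟩‖₂² = (f̃_{s,e}^r)² − (f̃_{s,e}^b)², where f̃_{s,e}^b = ⟨f, ψ_{s,e}^b⟩. -/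
open Finset

/-- The CUSUM contrast vector ψ_{s,e}^b. -/
noncomputable def psi (s e b t : ℕ) : ℝ :=
  if s ≤ t ∧ t ≤ b then
    Real.sqrt (((e : ℝ) - b) / ((((e : ℝ) - s + 1)) * ((b : ℝ) - s + 1)))
  else if b + 1 ≤ t ∧ t ≤ e then
    -Real.sqrt (((b : ℝ) - s + 1) / ((((e : ℝ) - s + 1)) * ((e : ℝ) - b)))
  else 0

lemma sum_psi_split (T s e b : ℕ) (g : ℕ → ℝ) (p q : ℝ)
    (h1 : 1 ≤ s) (hsb : s ≤ b) (hbe : b < e) (heT : e ≤ T) :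
    ∑ t ∈ Finset.Icc 1 T, g t *
      (if s ≤ t ∧ t ≤ b then p else if b + 1 ≤ t ∧ t ≤ e then -q else 0)
      = p * ∑ t ∈ Finset.Icc s b, g t - q * ∑ t ∈ Finset.Icc (b+1) e, g t := by
  have hsub : Finset.Icc s e ⊆ Finset.Icc 1 T := by
    intro t ht; simp only [Finset.mem_Icc] at *; omega
  rw [← Finset.sum_subset hsub (by
    intro t ht hnt
    simp only [Finset.mem_Icc] at ht hnt
    have h3 : ¬ (s ≤ t ∧ t ≤ b) := by omega
    have h2 : ¬ (b + 1 ≤ t ∧ t ≤ e) := by omega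
    rw [if_neg h3, if_neg h2, mul_zero])]
  have hunion : Finset.Icc s e = Finset.Icc s b ∪ Finset.Icc (b+1) e := by
    ext t; simp only [Finset.mem_Icc, Finset.mem_union]; omega
  have hdisj : Disjoint (Finset.Icc s b) (Finset.Icc (b+1) e) := by
    rw [Finset.disjoint_left]; intro t ht ht2
    simp only [Finset.mem_Icc] at *; omega
  rw [hunion, Finset.sum_union hdisj]
  have e1 : ∀ t ∈ Finset.Icc s b, g t *
      (if s ≤ t ∧ t ≤ b then p else if b + 1 ≤ t ∧ t ≤ e then -q else 0) = g t * p := by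
    intro t ht; simp only [Finset.mem_Icc] at ht
    rw [if_pos ⟨ht.1, ht.2⟩]
  have e2 : ∀ t ∈ Finset.Icc (b+1) e, g t *
      (if s ≤ t ∧ t ≤ b then p else if b + 1 ≤ t ∧ t ≤ e then -q else 0) = g t * (-q) := by
    intro t ht; simp only [Finset.mem_Icc] at ht
    rw [if_neg (by omega), if_pos ⟨ht.1, ht.2⟩]
  rw [Finset.sum_congr rfl e1, Finset.sum_congr rfl e2, ← Finset.sum_mul, ← Finset.sum_mul]
  ring

lemma sum_Icc_eq_card (m n : ℕ) (g : ℕ → ℝ) (c : ℝ) (hmn : m ≤ n + 1)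
    (h : ∀ t, m ≤ t → t ≤ n → g t = c) :
    ∑ t ∈ Finset.Icc m n, g t = ((n : ℝ) + 1 - m) * c := by
  rw [Finset.sum_congr rfl (fun t ht => by
    simp only [Finset.mem_Icc] at ht; exact h t ht.1 ht.2)]
  rw [Finset.sum_const, Nat.card_Icc, nsmul_eq_mul, Nat.cast_sub hmn]
  push_cast; ring

lemma sum_Icc_split (m k n : ℕ) (g : ℕ → ℝ) (h1 : m ≤ k + 1) (h2 : k ≤ n) :
    ∑ t ∈ Finset.Icc m n, g t
      = ∑ t ∈ Finset.Icc m k, g t + ∑ t ∈ Finset.Icc (k+1) n, g t := by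
  have hunion : Finset.Icc m n = Finset.Icc m k ∪ Finset.Icc (k+1) n := by
    ext t; simp only [Finset.mem_Icc, Finset.mem_union]; omega
  have hdisj : Disjoint (Finset.Icc m k) (Finset.Icc (k+1) n) := by
    rw [Finset.disjoint_left]; intro t ht ht2
    simp only [Finset.mem_Icc] at *; omega
  rw [hunion, Finset.sum_union hdisj]

/-- Algebraic core, case b ≤ r. -/
lemma alg_le (B1 B2 R1 R2 a d pb qb pr qr : ℝ)
    (hB1 : 0 < B1) (hB2 : 0 < B2) (hR1 : 0 < R1) (hR2 : 0 < R2)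
    (hsum : B1 + B2 = R1 + R2)
    (hpb : pb = Real.sqrt (B2 / ((B1 + B2) * B1)))
    (hqb : qb = Real.sqrt (B1 / ((B1 + B2) * B2)))
    (hpr : pr = Real.sqrt (R2 / ((B1 + B2) * R1)))
    (hqr : qr = Real.sqrt (R1 / ((B1 + B2) * R2))) :
    (pb * (B1 * pb) - qb * (B2 * (-qb)))
        * (pb * (B1 * a) - qb * ((R1 - B1) * a + R2 * d)) ^ 2
      - 2 * (pb * (B1 * a) - qb * ((R1 - B1) * a + R2 * d))
          * (pr * (R1 * a) - qr * (R2 * d))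
          * (pb * (B1 * pr) - qb * ((R1 - B1) * pr + R2 * (-qr)))
      + (pr * (R1 * pr) - qr * (R2 * (-qr)))
          * (pr * (R1 * a) - qr * (R2 * d)) ^ 2
    = (pr * (R1 * a) - qr * (R2 * d)) ^ 2
      - (pb * (B1 * a) - qb * ((R1 - B1) * a + R2 * d)) ^ 2 := by
  have hS : (0:ℝ) < B1 + B2 := by linarith
  set x := Real.sqrt B1 with hxd
  set y := Real.sqrt B2 with hyd
  set u := Real.sqrt R1 with hud
  set v := Real.sqrt R2 with hvd
  set w := Real.sqrt (B1 + B2) with hwd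
  have hx : 0 < x := Real.sqrt_pos.2 hB1
  have hy : 0 < y := Real.sqrt_pos.2 hB2
  have hu : 0 < u := Real.sqrt_pos.2 hR1
  have hv : 0 < v := Real.sqrt_pos.2 hR2
  have hw : 0 < w := Real.sqrt_pos.2 hS
  have hx2 : x ^ 2 = B1 := Real.sq_sqrt hB1.le
  have hy2 : y ^ 2 = B2 := Real.sq_sqrt hB2.le
  have hu2 : u ^ 2 = R1 := Real.sq_sqrt hR1.le
  have hv2 : v ^ 2 = R2 := Real.sq_sqrt hR2.le
  have hw2 : w ^ 2 = x ^ 2 + y ^ 2 := by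
    rw [hx2, hy2]; exact Real.sq_sqrt hS.le
  have huv : x ^ 2 + y ^ 2 = u ^ 2 + v ^ 2 := by
    rw [hx2, hy2, hu2, hv2]; exact hsum
  have hpb' : pb = y / (w * x) := by
    rw [hpb, Real.sqrt_div hB2.le, Real.sqrt_mul hS.le]
  have hqb' : qb = x / (w * y) := by
    rw [hqb, Real.sqrt_div hB1.le, Real.sqrt_mul hS.le]
  have hpr' : pr = v / (w * u) := by
    rw [hpr, Real.sqrt_div hR2.le, Real.sqrt_mul hS.le]
  have hqr' : qr = u / (w * v) := by
    rw [hqr, Real.sqrt_div hR1.le, Real.sqrt_mul hS.le]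
  rw [hpb', hqb', hpr', hqr', ← hx2, ← hy2, ← hu2, ← hv2]
  have hfb : y/(w*x)*(x^2*a) - x/(w*y)*((u^2-x^2)*a + v^2*d) = x*v^2*(a-d)/(w*y) := by
    field_simp
    linear_combination a * huv
  have hfr : v/(w*u)*(u^2*a) - u/(w*v)*(v^2*d) = u*v*(a-d)/w := by
    field_simp
  have hC : y/(w*x)*(x^2*(v/(w*u))) - x/(w*y)*((u^2-x^2)*(v/(w*u)) + v^2*(-(u/(w*v))))
      = x*v/(u*y) := by
    field_simp
    linear_combination (-1) * hw2
  have hNb : y/(w*x)*(x^2*(y/(w*x))) - x/(w*y)*(y^2*(-(x/(w*y)))) = 1 := by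
    field_simp
    linear_combination (-1)*hw2
  have hNr : v/(w*u)*(u^2*(v/(w*u))) - u/(w*v)*(v^2*(-(u/(w*v)))) = 1 := by
    field_simp
    linear_combination (-1)*hw2 + (-1)*huv
  rw [hfb, hfr, hC, hNb, hNr]
  field_simp
  ring

/-- Algebraic core, case r ≤ b. -/
lemma alg_ge (B1 B2 R1 R2 a d pb qb pr qr : ℝ)
    (hB1 : 0 < B1) (hB2 : 0 < B2) (hR1 : 0 < R1) (hR2 : 0 < R2)
    (hsum : B1 + B2 = R1 + R2)
    (hpb : pb = Real.sqrt (B2 / ((B1 + B2) * B1)))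
    (hqb : qb = Real.sqrt (B1 / ((B1 + B2) * B2)))
    (hpr : pr = Real.sqrt (R2 / ((B1 + B2) * R1)))
    (hqr : qr = Real.sqrt (R1 / ((B1 + B2) * R2))) :
    (pb * (B1 * pb) - qb * (B2 * (-qb)))
        * (pb * (R1 * a + (B1 - R1) * d) - qb * (B2 * d)) ^ 2
      - 2 * (pb * (R1 * a + (B1 - R1) * d) - qb * (B2 * d))
          * (pr * (R1 * a) - qr * (R2 * d))
          * (pb * (R1 * pr + (B1 - R1) * (-qr)) - qb * (B2 * (-qr)))
      + (pr * (R1 * pr) - qr * (R2 * (-qr)))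
          * (pr * (R1 * a) - qr * (R2 * d)) ^ 2
    = (pr * (R1 * a) - qr * (R2 * d)) ^ 2
      - (pb * (R1 * a + (B1 - R1) * d) - qb * (B2 * d)) ^ 2 := by
  have hS : (0:ℝ) < B1 + B2 := by linarith
  set x := Real.sqrt B1 with hxd
  set y := Real.sqrt B2 with hyd
  set u := Real.sqrt R1 with hud
  set v := Real.sqrt R2 with hvd
  set w := Real.sqrt (B1 + B2) with hwd
  have hx : 0 < x := Real.sqrt_pos.2 hB1
  have hy : 0 < y := Real.sqrt_pos.2 hB2
  have hu : 0 < u := Real.sqrt_pos.2 hR1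
  have hv : 0 < v := Real.sqrt_pos.2 hR2
  have hw : 0 < w := Real.sqrt_pos.2 hS
  have hx2 : x ^ 2 = B1 := Real.sq_sqrt hB1.le
  have hy2 : y ^ 2 = B2 := Real.sq_sqrt hB2.le
  have hu2 : u ^ 2 = R1 := Real.sq_sqrt hR1.le
  have hv2 : v ^ 2 = R2 := Real.sq_sqrt hR2.le
  have hw2 : w ^ 2 = x ^ 2 + y ^ 2 := by
    rw [hx2, hy2]; exact Real.sq_sqrt hS.le
  have huv : x ^ 2 + y ^ 2 = u ^ 2 + v ^ 2 := by
    rw [hx2, hy2, hu2, hv2]; exact hsum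
  have hpb' : pb = y / (w * x) := by
    rw [hpb, Real.sqrt_div hB2.le, Real.sqrt_mul hS.le]
  have hqb' : qb = x / (w * y) := by
    rw [hqb, Real.sqrt_div hB1.le, Real.sqrt_mul hS.le]
  have hpr' : pr = v / (w * u) := by
    rw [hpr, Real.sqrt_div hR2.le, Real.sqrt_mul hS.le]
  have hqr' : qr = u / (w * v) := by
    rw [hqr, Real.sqrt_div hR1.le, Real.sqrt_mul hS.le]
  rw [hpb', hqb', hpr', hqr', ← hx2, ← hy2, ← hu2, ← hv2]
  have hfb : y/(w*x)*(u^2*a + (x^2-u^2)*d) - x/(w*y)*(y^2*d) = y*u^2*(a-d)/(w*x) := by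
    field_simp; ring_nf
  have hfr : v/(w*u)*(u^2*a) - u/(w*v)*(v^2*d) = u*v*(a-d)/w := by
    field_simp
  have hC : y/(w*x)*(u^2*(v/(w*u)) + (x^2-u^2)*(-(u/(w*v)))) - x/(w*y)*(y^2*(-(u/(w*v))))
      = u*y/(x*v) := by
    field_simp
    linear_combination (-1) * hw2 + (-1) * huv
  have hNb : y/(w*x)*(x^2*(y/(w*x))) - x/(w*y)*(y^2*(-(x/(w*y)))) = 1 := by
    field_simp
    linear_combination (-1)*hw2
  have hNr : v/(w*u)*(u^2*(v/(w*u))) - u/(w*v)*(v^2*(-(u/(w*v)))) = 1 := by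
    field_simp
    linear_combination (-1)*hw2 + (-1)*huv
  rw [hfb, hfr, hC, hNb, hNr]
  field_simp
  ring

/-- For a piecewise-constant f with single change-point at r on [s,e]:
‖ψ_{s,e}^b⟨f,ψ_{s,e}^b⟩ − ψ_{s,e}^r⟨f,ψ_{s,e}^r⟩‖₂² = (f̃_{s,e}^r)² − (f̃_{s,e}^b)². -/
theorem stmt_7 (T s r e b : ℕ) (f : ℕ → ℝ)
    (h1 : 1 ≤ s) (hsr : s ≤ r) (hre : r < e) (heT : e ≤ T)
    (hsb : s ≤ b) (hbe : b < e)
    (hf1 : ∀ t, s ≤ t → t ≤ r → f t = f r)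
    (hf2 : ∀ t, r + 1 ≤ t → t ≤ e → f t = f (r + 1)) :
    ∑ t ∈ Finset.Icc 1 T,
        (psi s e b t * (∑ u ∈ Finset.Icc 1 T, f u * psi s e b u)
          - psi s e r t * (∑ u ∈ Finset.Icc 1 T, f u * psi s e r u)) ^ 2 =
      (∑ u ∈ Finset.Icc 1 T, f u * psi s e r u) ^ 2
        - (∑ u ∈ Finset.Icc 1 T, f u * psi s e b u) ^ 2 := by
  -- notation for the four sqrt constants
  set pb := Real.sqrt (((e : ℝ) - b) / (((e : ℝ) - s + 1) * ((b : ℝ) - s + 1))) with hpbd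
  set qb := Real.sqrt (((b : ℝ) - s + 1) / (((e : ℝ) - s + 1) * ((e : ℝ) - b))) with hqbd
  set pr := Real.sqrt (((e : ℝ) - r) / (((e : ℝ) - s + 1) * ((r : ℝ) - s + 1))) with hprd
  set qr := Real.sqrt (((r : ℝ) - s + 1) / (((e : ℝ) - s + 1) * ((e : ℝ) - r))) with hqrd
  -- key splitting
  have key : ∀ (c : ℕ), s ≤ c → c < e → ∀ g : ℕ → ℝ,
      ∑ t ∈ Finset.Icc 1 T, g t * psi s e c t
        = Real.sqrt (((e : ℝ) - c) / (((e : ℝ) - s + 1) * ((c : ℝ) - s + 1)))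
            * ∑ t ∈ Finset.Icc s c, g t
          - Real.sqrt (((c : ℝ) - s + 1) / (((e : ℝ) - s + 1) * ((e : ℝ) - c)))
            * ∑ t ∈ Finset.Icc (c+1) e, g t := by
    intro c hc1 hc2 g
    simpa only [psi] using sum_psi_split T s e c g _ _ h1 hc1 hc2 heT
  -- psi values
  have hval1 : ∀ (c t : ℕ), s ≤ t → t ≤ c → psi s e c t
      = Real.sqrt (((e : ℝ) - c) / (((e : ℝ) - s + 1) * ((c : ℝ) - s + 1))) := by
    intro c t ht1 ht2; simp only [psi]; rw [if_pos ⟨ht1, ht2⟩]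
  have hval2 : ∀ (c t : ℕ), c + 1 ≤ t → t ≤ e → psi s e c t
      = -Real.sqrt (((c : ℝ) - s + 1) / (((e : ℝ) - s + 1) * ((e : ℝ) - c))) := by
    intro c t ht1 ht2; simp only [psi]
    rw [if_neg (by omega), if_pos ⟨ht1, ht2⟩]
  -- expand the square
  have hexp : ∀ t : ℕ,
      (psi s e b t * (∑ u ∈ Finset.Icc 1 T, f u * psi s e b u)
        - psi s e r t * (∑ u ∈ Finset.Icc 1 T, f u * psi s e r u)) ^ 2
      = (psi s e b t * psi s e b t) * (∑ u ∈ Finset.Icc 1 T, f u * psi s e b u) ^ 2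
        - 2 * (∑ u ∈ Finset.Icc 1 T, f u * psi s e b u)
            * (∑ u ∈ Finset.Icc 1 T, f u * psi s e r u) * (psi s e r t * psi s e b t)
        + (psi s e r t * psi s e r t) * (∑ u ∈ Finset.Icc 1 T, f u * psi s e r u) ^ 2 := by
    intro t; ring
  rw [Finset.sum_congr rfl (fun t _ => hexp t), Finset.sum_add_distrib,
    Finset.sum_sub_distrib, ← Finset.sum_mul, ← Finset.mul_sum, ← Finset.sum_mul]
  -- rewrite all five sums using key
  rw [key b hsb hbe (fun t => psi s e b t), key b hsb hbe f,
    key b hsb hbe (fun t => psi s e r t), key r hsr hre (fun t => psi s e r t),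
    key r hsr hre f]
  -- evaluate interval sums
  have hNb1 : ∑ t ∈ Finset.Icc s b, psi s e b t = ((b:ℝ) + 1 - s) * pb :=
    sum_Icc_eq_card s b _ pb (by omega) (fun t h1 h2 => hval1 b t h1 h2)
  have hNb2 : ∑ t ∈ Finset.Icc (b+1) e, psi s e b t = ((e:ℝ) + 1 - ((b:ℝ)+1)) * (-qb) := by
    have := sum_Icc_eq_card (b+1) e (fun t => psi s e b t) (-qb) (by omega)
      (fun t h1 h2 => hval2 b t h1 h2)
    push_cast at this ⊢; linarith
  have hNr1 : ∑ t ∈ Finset.Icc s r, psi s e r t = ((r:ℝ) + 1 - s) * pr :=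
    sum_Icc_eq_card s r _ pr (by omega) (fun t h1 h2 => hval1 r t h1 h2)
  have hNr2 : ∑ t ∈ Finset.Icc (r+1) e, psi s e r t = ((e:ℝ) + 1 - ((r:ℝ)+1)) * (-qr) := by
    have := sum_Icc_eq_card (r+1) e (fun t => psi s e r t) (-qr) (by omega)
      (fun t h1 h2 => hval2 r t h1 h2)
    push_cast at this ⊢; linarith
  have hFr1 : ∑ t ∈ Finset.Icc s r, f t = ((r:ℝ) + 1 - s) * f r :=
    sum_Icc_eq_card s r f (f r) (by omega) (fun t h1 h2 => hf1 t h1 h2)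
  have hFr2 : ∑ t ∈ Finset.Icc (r+1) e, f t = ((e:ℝ) + 1 - ((r:ℝ)+1)) * f (r+1) := by
    have := sum_Icc_eq_card (r+1) e f (f (r+1)) (by omega)
      (fun t h1 h2 => hf2 t h1 h2)
    push_cast at this ⊢; linarith
  rw [hNr1, hNr2, hFr1, hFr2]
  -- positivity facts
  have hB1 : (0:ℝ) < (b:ℝ) - s + 1 := by
    have : (s:ℝ) ≤ b := by exact_mod_cast hsb
    linarith
  have hB2 : (0:ℝ) < (e:ℝ) - b := by
    have : (b:ℝ) < e := by exact_mod_cast hbe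
    linarith
  have hR1 : (0:ℝ) < (r:ℝ) - s + 1 := by
    have : (s:ℝ) ≤ r := by exact_mod_cast hsr
    linarith
  have hR2 : (0:ℝ) < (e:ℝ) - r := by
    have : (r:ℝ) < e := by exact_mod_cast hre
    linarith
  have hsum : ((b:ℝ) - s + 1) + ((e:ℝ) - b) = ((r:ℝ) - s + 1) + ((e:ℝ) - r) := by ring
  have hSe : ((e:ℝ) - s + 1) = ((b:ℝ) - s + 1) + ((e:ℝ) - b) := by ring
  have hpb : pb = Real.sqrt (((e:ℝ) - b) / ((((b:ℝ) - s + 1) + ((e:ℝ) - b)) * ((b:ℝ) - s + 1))) := by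
    rw [hpbd, ← hSe]
  have hqb : qb = Real.sqrt (((b:ℝ) - s + 1) / ((((b:ℝ) - s + 1) + ((e:ℝ) - b)) * ((e:ℝ) - b))) := by
    rw [hqbd, ← hSe]
  have hpr : pr = Real.sqrt (((e:ℝ) - r) / ((((b:ℝ) - s + 1) + ((e:ℝ) - b)) * ((r:ℝ) - s + 1))) := by
    rw [hprd, ← hSe]
  have hqr : qr = Real.sqrt (((r:ℝ) - s + 1) / ((((b:ℝ) - s + 1) + ((e:ℝ) - b)) * ((e:ℝ) - r))) := by
    rw [hqrd, ← hSe]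
  rcases le_or_gt b r with hbr | hrb
  · -- b ≤ r
    have hPsi1 : ∑ t ∈ Finset.Icc s b, psi s e r t = ((b:ℝ) + 1 - s) * pr :=
      sum_Icc_eq_card s b _ pr (by omega) (fun t h1 h2 => hval1 r t h1 (le_trans h2 hbr))
    have hPsi2 : ∑ t ∈ Finset.Icc (b+1) e, psi s e r t
        = ((r:ℝ) + 1 - ((b:ℝ)+1)) * pr + ((e:ℝ) + 1 - ((r:ℝ)+1)) * (-qr) := by
      rw [sum_Icc_split (b+1) r e _ (by omega) (by omega)]
      have e1 : ∑ t ∈ Finset.Icc (b+1) r, psi s e r t = ((r:ℝ) + 1 - ((b:ℝ)+1)) * pr := by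
        have := sum_Icc_eq_card (b+1) r (fun t => psi s e r t) pr (by omega)
          (fun t h1 h2 => hval1 r t (by omega) h2)
        push_cast at this ⊢; linarith
      rw [e1, hNr2]
    have hF1 : ∑ t ∈ Finset.Icc s b, f t = ((b:ℝ) + 1 - s) * f r :=
      sum_Icc_eq_card s b f (f r) (by omega) (fun t h1 h2 => hf1 t h1 (le_trans h2 hbr))
    have hF2 : ∑ t ∈ Finset.Icc (b+1) e, f t
        = ((r:ℝ) + 1 - ((b:ℝ)+1)) * f r + ((e:ℝ) + 1 - ((r:ℝ)+1)) * f (r+1) := by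
      rw [sum_Icc_split (b+1) r e f (by omega) (by omega)]
      have e1 : ∑ t ∈ Finset.Icc (b+1) r, f t = ((r:ℝ) + 1 - ((b:ℝ)+1)) * f r := by
        have := sum_Icc_eq_card (b+1) r f (f r) (by omega)
          (fun t h1 h2 => hf1 t (by omega) h2)
        push_cast at this ⊢; linarith
      rw [e1, hFr2]
    rw [hNb1, hNb2, hPsi1, hPsi2, hF1, hF2]
    linear_combination alg_le ((b:ℝ) - s + 1) ((e:ℝ) - b) ((r:ℝ) - s + 1) ((e:ℝ) - r)
      (f r) (f (r+1)) pb qb pr qr hB1 hB2 hR1 hR2 hsum hpb hqb hpr hqr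
  · -- r < b
    have hPsi1 : ∑ t ∈ Finset.Icc s b, psi s e r t
        = ((r:ℝ) + 1 - s) * pr + ((b:ℝ) + 1 - ((r:ℝ)+1)) * (-qr) := by
      rw [sum_Icc_split s r b _ (by omega) (by omega)]
      have e1 : ∑ t ∈ Finset.Icc (r+1) b, psi s e r t = ((b:ℝ) + 1 - ((r:ℝ)+1)) * (-qr) := by
        have := sum_Icc_eq_card (r+1) b (fun t => psi s e r t) (-qr) (by omega)
          (fun t h1 h2 => hval2 r t h1 (by omega))
        push_cast at this ⊢; linarith
      rw [e1, hNr1]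
    have hPsi2 : ∑ t ∈ Finset.Icc (b+1) e, psi s e r t = ((e:ℝ) + 1 - ((b:ℝ)+1)) * (-qr) := by
      have := sum_Icc_eq_card (b+1) e (fun t => psi s e r t) (-qr) (by omega)
        (fun t h1 h2 => hval2 r t (by omega) h2)
      push_cast at this ⊢; linarith
    have hF1 : ∑ t ∈ Finset.Icc s b, f t
        = ((r:ℝ) + 1 - s) * f r + ((b:ℝ) + 1 - ((r:ℝ)+1)) * f (r+1) := by
      rw [sum_Icc_split s r b f (by omega) (by omega)]
      have e1 : ∑ t ∈ Finset.Icc (r+1) b, f t = ((b:ℝ) + 1 - ((r:ℝ)+1)) * f (r+1) := by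
        have := sum_Icc_eq_card (r+1) b f (f (r+1)) (by omega)
          (fun t h1 h2 => hf2 t h1 (by omega))
        push_cast at this ⊢; linarith
      rw [e1, hFr1]
    have hF2 : ∑ t ∈ Finset.Icc (b+1) e, f t = ((e:ℝ) + 1 - ((b:ℝ)+1)) * f (r+1) := by
      have := sum_Icc_eq_card (b+1) e f (f (r+1)) (by omega)
        (fun t h1 h2 => hf2 t (by omega) h2)
      push_cast at this ⊢; linarith
    rw [hNb1, hNb2, hPsi1, hPsi2, hF1, hF2]
    linear_combination alg_ge ((b:ℝ) - s + 1) ((e:ℝ) - b) ((r:ℝ) - s + 1) ((e:ℝ) - r)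
      (f r) (f (r+1)) pb qb pr qr hB1 hB2 hR1 hR2 hsum hpb hqb hpr hqr
end

section
/- For the generalized version with expansion rate λ_T ≤ δ_T/m (m > 1), the lower-bound requirement on the constant C̄ becomes C̄ > √(4m/(m−1)) (√C₃ + 4√2), and this bound is strictly decreasing in m for m > 1. -/
/-- Remark 1: with expansion rate λ_T ≤ δ_T/m (m > 1), the requirement on C̄
becomes C̄ > √(4m/(m−1))(√C₃ + 4√2), and this bound is strictly decreasing in m. -/
theorem stmt_14 (C₃ C₁ : ℝ)
    (h3 : C₃ = 2 * (2 * Real.sqrt 2 + 4) ^ 2)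
    (h1 : C₁ = Real.sqrt C₃ + Real.sqrt 8) :
    (∀ m Cbar : ℝ, 1 < m → 0 < Cbar →
      (Cbar * (Real.sqrt ((m - 1) / (4 * m)) - 2 * Real.sqrt 2 / Cbar) > C₁ ↔
        Cbar > Real.sqrt (4 * m / (m - 1)) * (Real.sqrt C₃ + 4 * Real.sqrt 2))) ∧
    (∀ m₁ m₂ : ℝ, 1 < m₁ → m₁ < m₂ →
      Real.sqrt (4 * m₂ / (m₂ - 1)) * (Real.sqrt C₃ + 4 * Real.sqrt 2) <
        Real.sqrt (4 * m₁ / (m₁ - 1)) * (Real.sqrt C₃ + 4 * Real.sqrt 2)) := by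
  have h2 : (0:ℝ) < Real.sqrt 2 := Real.sqrt_pos.2 (by norm_num)
  have h8 : Real.sqrt 8 = 2 * Real.sqrt 2 := by
    rw [show (8:ℝ) = 2 ^ 2 * 2 by norm_num, Real.sqrt_mul (by positivity),
      Real.sqrt_sq (by norm_num)]
  have hC3nn : 0 ≤ Real.sqrt C₃ := Real.sqrt_nonneg _
  set K : ℝ := Real.sqrt C₃ + 4 * Real.sqrt 2 with hK
  have hKpos : 0 < K := by linarith
  constructor
  · intro m Cbar hm hC
    set a : ℝ := Real.sqrt ((m - 1) / (4 * m)) with ha'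
    set s : ℝ := Real.sqrt (4 * m / (m - 1)) with hs'
    have ha : 0 < a := Real.sqrt_pos.2 (div_pos (by linarith) (by linarith))
    have hs : 0 < s := Real.sqrt_pos.2 (div_pos (by linarith) (by linarith))
    have hsa : s * a = 1 := by
      rw [ha', hs', ← Real.sqrt_mul (le_of_lt (div_pos (by linarith) (by linarith)))]
      have hne1 : m - 1 ≠ 0 := by linarith
      have hne2 : 4 * m ≠ 0 := by linarith
      rw [show 4 * m / (m - 1) * ((m - 1) / (4 * m)) = 1 by
        field_simp]
      exact Real.sqrt_one
    have hlhs : Cbar * (a - 2 * Real.sqrt 2 / Cbar) = Cbar * a - 2 * Real.sqrt 2 := by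
      field_simp
    rw [hlhs, h1, h8]
    constructor
    · intro h
      have h' : Cbar * a > K := by rw [hK]; linarith
      have h2' : s * (Cbar * a) > s * K := (mul_lt_mul_iff_right₀ hs).2 h'
      have e : s * (Cbar * a) = Cbar := by
        rw [mul_comm Cbar a, ← mul_assoc, hsa, one_mul]
      linarith
    · intro h
      have h2' : a * Cbar > a * (s * K) := (mul_lt_mul_iff_right₀ ha).2 h
      have e : a * (s * K) = K := by
        rw [← mul_assoc, mul_comm a s, hsa, one_mul]
      rw [e] at h2'
      have : Cbar * a > K := by linarith [h2']
      rw [hK] at this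
      linarith
  · intro m₁ m₂ hm1 hm12
    have harg : 4 * m₂ / (m₂ - 1) < 4 * m₁ / (m₁ - 1) := by
      rw [div_lt_div_iff₀ (by linarith) (by linarith)]
      nlinarith
    have hnn : 0 ≤ 4 * m₂ / (m₂ - 1) := le_of_lt (div_pos (by linarith) (by linarith))
    exact mul_lt_mul_of_pos_right (Real.sqrt_lt_sqrt hnn harg) hKpos
end

section
/- With φ = φ_{s,e}^b the continuous piecewise-linear contrast vector as defined above, φ is orthogonal to the linear vector γ_{s,e}, where γ_{s,e}(t) = c⁻¹(t − (e+s)/2) for s ≤ t ≤ e with c = ((1/12)(e−s+1)(e²−2es+2e+s²−2s))^{1/2} and γ_{s,e}(t)=0 otherwise: ∑_{t=s}^{e} φ(t)·(t − (e+s)/2) = 0. -/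
open Finset

noncomputable def phi (s e b t : ℕ) : ℝ :=
  let n : ℝ := (e : ℝ) - s + 1
  let a : ℝ := Real.sqrt (6 / (n * (n ^ 2 - 1) *
    (1 + ((e : ℝ) - b + 1) * ((b : ℝ) - s + 1) + ((e : ℝ) - b) * ((b : ℝ) - s))))
  let β : ℝ := Real.sqrt ((((e : ℝ) - b + 1) * ((e : ℝ) - b)) /
    (((b : ℝ) - s + 1) * ((b : ℝ) - s)))
  if s ≤ t ∧ t ≤ b then
    a * β * (((e : ℝ) + 2 * b - 3 * s + 2) * t -
      ((b : ℝ) * e + (b : ℝ) * s - 2 * (s : ℝ) ^ 2 + 2 * s))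
  else if b + 1 ≤ t ∧ t ≤ e then
    -(a / β) * ((3 * (e : ℝ) - 2 * b - s + 2) * t -
      (2 * (e : ℝ) ^ 2 + 2 * e - (b : ℝ) * e - (b : ℝ) * s))
  else 0

lemma phi_eq1 (s e b t : ℕ) (h : s ≤ t ∧ t ≤ b) : phi s e b t =
    Real.sqrt (6 / (((e : ℝ) - s + 1) * (((e : ℝ) - s + 1) ^ 2 - 1) *
      (1 + ((e : ℝ) - b + 1) * ((b : ℝ) - s + 1) + ((e : ℝ) - b) * ((b : ℝ) - s)))) *
    Real.sqrt ((((e : ℝ) - b + 1) * ((e : ℝ) - b)) / (((b : ℝ) - s + 1) * ((b : ℝ) - s))) *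
    (((e : ℝ) + 2 * b - 3 * s + 2) * t - ((b : ℝ) * e + (b : ℝ) * s - 2 * (s : ℝ) ^ 2 + 2 * s)) := by
  simp only [phi]
  rw [if_pos h]

lemma phi_eq2 (s e b t : ℕ) (h : b < t ∧ t ≤ e) : phi s e b t =
    -(Real.sqrt (6 / (((e : ℝ) - s + 1) * (((e : ℝ) - s + 1) ^ 2 - 1) *
      (1 + ((e : ℝ) - b + 1) * ((b : ℝ) - s + 1) + ((e : ℝ) - b) * ((b : ℝ) - s)))) /
    Real.sqrt ((((e : ℝ) - b + 1) * ((e : ℝ) - b)) / (((b : ℝ) - s + 1) * ((b : ℝ) - s)))) *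
    ((3 * (e : ℝ) - 2 * b - s + 2) * t - (2 * (e : ℝ) ^ 2 + 2 * e - (b : ℝ) * e - (b : ℝ) * s)) := by
  simp only [phi]
  rw [if_neg (by omega), if_pos ⟨by omega, h.2⟩]

lemma sum_lin (s n : ℕ) (p q c : ℝ) :
    ∑ t ∈ Icc s (s + n), (p * t + q) * ((t:ℝ) - c) =
      ((n:ℝ)+1) * ((p * s + q) * ((s:ℝ) - c))
      + ((n:ℝ) * ((n:ℝ)+1) / 2) * (p * ((s:ℝ) - c) + (p * s + q))
      + p * ((n:ℝ) * ((n:ℝ)+1) * (2*(n:ℝ)+1) / 6) := by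
  induction n with
  | zero => simp
  | succ n ih =>
    rw [show s + (n+1) = (s + n) + 1 from rfl, Finset.sum_Icc_succ_top (by omega), ih]
    push_cast; ring

/-- The piecewise-linear contrast vector is orthogonal to the linear vector γ_{s,e}:
∑_{t=s}^{e} φ(t)(t − (e+s)/2) = 0. -/
theorem stmt_16 (s b e : ℕ) (h1 : 1 ≤ s) (hsb : s < b) (hbe : b < e) :
    ∑ t ∈ Finset.Icc s e, phi s e b t * ((t : ℝ) - ((e : ℝ) + s) / 2) = 0 := by
  obtain ⟨m, rfl⟩ := Nat.exists_eq_add_of_lt hsb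
  obtain ⟨k, rfl⟩ := Nat.exists_eq_add_of_lt hbe
  have hsplit : Finset.Icc s (s+m+1+k+1)
      = Finset.Icc s (s+m+1) ∪ Finset.Icc (s+m+1+1) (s+m+1+k+1) := by
    ext t; simp only [Finset.mem_Icc, Finset.mem_union]; omega
  have hdisj : Disjoint (Finset.Icc s (s+m+1)) (Finset.Icc (s+m+1+1) (s+m+1+k+1)) := by
    rw [Finset.disjoint_left]; intro t ht ht'
    simp only [Finset.mem_Icc] at ht ht'; omega
  rw [hsplit, Finset.sum_union hdisj]
  set c : ℝ := (((s+m+1+k+1 : ℕ) : ℝ) + (s:ℝ)) / 2 with hc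
  set A : ℝ := Real.sqrt (6 / ((((s+m+1+k+1:ℕ) : ℝ) - s + 1) * ((((s+m+1+k+1:ℕ) : ℝ) - s + 1) ^ 2 - 1) *
      (1 + (((s+m+1+k+1:ℕ) : ℝ) - ((s+m+1:ℕ):ℝ) + 1) * (((s+m+1:ℕ) : ℝ) - s + 1)
        + (((s+m+1+k+1:ℕ) : ℝ) - ((s+m+1:ℕ):ℝ)) * (((s+m+1:ℕ) : ℝ) - s)))) with hA
  set B : ℝ := Real.sqrt (((((s+m+1+k+1:ℕ) : ℝ) - ((s+m+1:ℕ):ℝ) + 1) * (((s+m+1+k+1:ℕ) : ℝ) - ((s+m+1:ℕ):ℝ)))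
      / ((((s+m+1:ℕ) : ℝ) - s + 1) * (((s+m+1:ℕ) : ℝ) - s))) with hB
  have S1 : ∑ t ∈ Finset.Icc s (s+m+1), phi s (s+m+1+k+1) (s+m+1) t * ((t:ℝ) - c)
      = A * B * ∑ t ∈ Finset.Icc s (s+m+1),
        (((((s+m+1+k+1:ℕ)):ℝ) + 2*((s+m+1:ℕ):ℝ) - 3*(s:ℝ) + 2) * (t:ℝ) +
          -(((s+m+1:ℕ):ℝ)*((s+m+1+k+1:ℕ):ℝ) + ((s+m+1:ℕ):ℝ)*(s:ℝ) - 2*(s:ℝ)^2 + 2*(s:ℝ))) * ((t:ℝ) - c) := by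
    rw [Finset.mul_sum]
    refine Finset.sum_congr rfl fun t ht => ?_
    rw [Finset.mem_Icc] at ht
    rw [phi_eq1 _ _ _ _ ht, hA, hB]
    ring
  have S2 : ∑ t ∈ Finset.Icc (s+m+1+1) (s+m+1+k+1), phi s (s+m+1+k+1) (s+m+1) t * ((t:ℝ) - c)
      = (-(A / B)) * ∑ t ∈ Finset.Icc (s+m+1+1) (s+m+1+k+1),
        ((3*((s+m+1+k+1:ℕ):ℝ) - 2*((s+m+1:ℕ):ℝ) - (s:ℝ) + 2) * (t:ℝ) +
          -(2*((s+m+1+k+1:ℕ):ℝ)^2 + 2*((s+m+1+k+1:ℕ):ℝ) - ((s+m+1:ℕ):ℝ)*((s+m+1+k+1:ℕ):ℝ)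
             - ((s+m+1:ℕ):ℝ)*(s:ℝ))) * ((t:ℝ) - c) := by
    rw [Finset.mul_sum]
    refine Finset.sum_congr rfl fun t ht => ?_
    rw [Finset.mem_Icc] at ht
    rw [phi_eq2 _ _ _ _ ⟨by omega, ht.2⟩, hA, hB]
    ring
  rw [S1, S2,
    show s+m+1 = s+(m+1) from rfl,
    show s+(m+1)+k+1 = (s+(m+1)+1)+k by omega,
    sum_lin, sum_lin]
  have hBpos : 0 < B := by
    rw [hB]
    apply Real.sqrt_pos.2
    apply div_pos <;> push_cast <;> nlinarith [Nat.cast_nonneg (α := ℝ) s, Nat.cast_nonneg (α := ℝ) m, Nat.cast_nonneg (α := ℝ) k]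
  have hB2 : B^2 * ((((m:ℝ))+2)*(((m:ℝ))+1)) = (((k:ℝ))+2)*(((k:ℝ))+1) := by
    have harg : (((((s+m+1+k+1:ℕ) : ℝ) - ((s+m+1:ℕ):ℝ) + 1) * (((s+m+1+k+1:ℕ) : ℝ) - ((s+m+1:ℕ):ℝ)))
      / ((((s+m+1:ℕ) : ℝ) - s + 1) * (((s+m+1:ℕ) : ℝ) - s)))
        = ((((k:ℝ))+2)*(((k:ℝ))+1)) / ((((m:ℝ))+2)*(((m:ℝ))+1)) := by
      push_cast; ring_nf
    rw [hB, harg, Real.sq_sqrt (by positivity), div_mul_cancel₀]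
    positivity
  rw [hc]
  push_cast
  have hmne : ((m:ℝ)+2)*((m:ℝ)+1) ≠ 0 := by positivity
  field_simp [hBpos.ne']
  have hB2div : B^2 = ((((k:ℝ))+2)*(((k:ℝ))+1)) / ((((m:ℝ))+2)*(((m:ℝ))+1)) := by
    rw [eq_div_iff hmne]; exact hB2
  ring_nf
  rw [hB2div]
  field_simp
  ring
end
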